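/- For every LR-string S, r(P_L(S)) = r(S) − 2^(−|S|) and r(P_R(S)) = r(S) + 2^(−|S|), where the extensions r(R^{-1}) = 0 and r(L^{-1}) = 2 are used when the parent is a formal inverse symbol. -/

import Mathlib

open List

/-- `r`-value of an LR-string (`true` = R, `false` = L):
`r(ε) = 1`, `r(SL) = r(S) - 2^(-|SL|)`, `r(SR) = r(S) + 2^(-|SR|)`. -/
def rval (S : List Bool) : ℚ :=
  1 + ∑ i ∈ Finset.range S.length,
      (if S.getD i false then ((2:ℚ)^(i+1))⁻¹ else -((2:ℚ)^(i+1))⁻¹)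

/-- Generalized strings: LR-strings plus the formal symbols `R⁻¹ = inv true`
and `L⁻¹ = inv false`. -/
inductive Gen where
  | inv : Bool → Gen
  | str : List Bool → Gen
deriving DecidableEq

/-- Left parent: `P_L(ε) = R⁻¹`, `P_L(SL) = P_L(S)`, `P_L(SR) = S`. -/
def PL (S : List Bool) : Gen :=
  match S.reverse.dropWhile (· = false) with
  | [] => Gen.inv true
  | _ :: t => Gen.str t.reverse

/-- Right parent: `P_R(ε) = L⁻¹`, `P_R(SL) = S`, `P_R(SR) = P_R(S)`. -/
def PR (S : List Bool) : Gen :=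
  match S.reverse.dropWhile (· = true) with
  | [] => Gen.inv false
  | _ :: t => Gen.str t.reverse

/-- Extension of `r` to generalized strings: `r(R⁻¹) = 0`, `r(L⁻¹) = 2`. -/
def rg : Gen → ℚ
  | Gen.inv true => 0
  | Gen.inv false => 2
  | Gen.str S => rval S

/-- Length of a generalized string; the formal symbols have length `-1`. -/
def glen : Gen → ℤ
  | Gen.inv _ => -1
  | Gen.str S => S.length

/-- Position function: `N(ε) = 0`, `N(SL) = 2N(S)+1`, `N(SR) = 2N(S)+2`. -/
def posN (S : List Bool) : ℕ :=
  ∑ i ∈ Finset.range S.length, (if S.getD i false then 2 else 1) * 2^(S.length - 1 - i)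

/-- The alternating-block string `S(k₀,…,k_m) = R^{k₀} L^{k₁} R^{k₂} ⋯`. -/
def blockStr (ks : List ℕ) : List Bool :=
  (ks.zipIdx.map (fun p => List.replicate p.1 (decide (p.2 % 2 = 0)))).flatten

/-- Continued fraction `[q₀,…,q_m]`. -/
def cf : List ℚ → ℚ
  | [] => 0
  | [q] => q
  | q :: qs => q + (cf qs)⁻¹

/-- Admissible continued-fraction index sequences: `[q₀]` with `q₀ ≥ 1`, or
`[q₀,…,q_m]` with `m ≥ 1`, intermediate `qᵢ ≥ 1`, and `q_m ≥ 2`. -/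
def CFAdmissible (qs : List ℕ) : Prop :=
  qs ≠ [] ∧ (qs.length = 1 → 1 ≤ qs.getD 0 0) ∧
    (∀ i, 1 ≤ i → i + 1 < qs.length → 1 ≤ qs.getD i 0) ∧
    (2 ≤ qs.length → 2 ≤ qs.getLastD 0)

/-- The map `f([q₀,…,q_m]) = S(q₀,…,q_{m-1},q_m - 1)`. -/
def cfToStr (qs : List ℕ) : List Bool :=
  blockStr (qs.dropLast ++ [qs.getLastD 0 - 1])

lemma rval_append_singleton (S : List Bool) (b : Bool) :
    rval (S ++ [b]) = rval S +
      (if b then ((2:ℚ)^(S.length+1))⁻¹ else -((2:ℚ)^(S.length+1))⁻¹) := by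
  have hprefix : ∀ i ∈ Finset.range S.length, (S ++ [b]).getD i false = S.getD i false :=
    fun i hi => List.getD_append _ _ _ _ (Finset.mem_range.mp hi)
  have hlast : (S ++ [b]).getD S.length false = b := by simp
  rw [rval, rval, List.length_append, List.length_singleton, Finset.sum_range_succ,
    Finset.sum_congr rfl fun i hi => by rw [hprefix i hi], hlast, add_assoc]

lemma PL_append_false (S : List Bool) : PL (S ++ [false]) = PL S := by
  simp [PL]

lemma PL_append_true (S : List Bool) : PL (S ++ [true]) = Gen.str S := by
  simp [PL]

lemma PR_append_true (S : List Bool) : PR (S ++ [true]) = PR S := by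
  simp [PR]

lemma PR_append_false (S : List Bool) : PR (S ++ [false]) = Gen.str S := by
  simp [PR]

lemma inv_two_pow_succ_add_self (n : ℕ) :
    ((2:ℚ)^(n+1))⁻¹ + ((2:ℚ)^(n+1))⁻¹ = ((2:ℚ)^n)⁻¹ := by
  rw [pow_succ]
  field_simp
  norm_num

/-- Theorem 2.2(e): `r(P_L(S)) = r(S) - 2^(-|S|)` and
`r(P_R(S)) = r(S) + 2^(-|S|)`. -/
theorem stmt5 (S : List Bool) :
    rg (PL S) = rval S - ((2 : ℚ) ^ S.length)⁻¹ ∧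
      rg (PR S) = rval S + ((2 : ℚ) ^ S.length)⁻¹ := by
  induction S using List.reverseRecOn with
  | nil => norm_num [PL, PR, rg, rval]
  | append_singleton T b ih =>
    -- The appended letter moves `r` by half of the parent gap `2^(-|T|)`.
    have hhalf := inv_two_pow_succ_add_self T.length
    rw [rval_append_singleton, List.length_append, List.length_singleton]
    cases b
    · rw [PL_append_false, PR_append_false, if_neg Bool.false_ne_true, ih.1, rg]
      constructor <;> linarith
    · rw [PL_append_true, PR_append_true, if_pos rfl, ih.2, rg]
      constructor <;> linarith
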